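/- Let S = k[x_1,x_2,x_3], let d = (d_1,d_2,d_3) with 1 ≤ d_1 ≤ d_2 ≤ d_3 and 1 ≤ D ≤ d_1+d_2+d_3-3, and let c = (c_1,c_2,c_3) be defined as follows: with a minimal such that D ≤ Σ_{i=1}^a (d_i-1), set c_i = 1 for i < a, c_a = d_a - (D - Σ_{i=1}^{a-1}(d_i-1)), and c_i = d_i for i > a. Let L(d;D) = (x_1^{d_1},x_2^{d_2},x_3^{d_3}, U_D) where U_D is the lexicographically largest degree-D monomial not in (x_1^{d_1},x_2^{d_2},x_3^{d_3}). Then the k-vector space dimension of S/L(d;D) equals d_1 d_2 d_3 - c_1 c_2 c_3. -/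

import Mathlib

open MvPolynomial Finsupp

variable {k : Type} [Field k]

/-- Hilbert function of `S/I` in degree `m`, where `S = k[x_1,...,x_n]`. -/
noncomputable def HF {n : ℕ} (I : Ideal (MvPolynomial (Fin n) k)) (m : ℕ) : ℕ :=
  Module.finrank k
    ((homogeneousSubmodule (Fin n) k m).map (Ideal.Quotient.mkₐ k I).toLinearMap)

/-- The ideal `(x_1^{d_1},...,x_h^{d_h})` inside `k[x_1,...,x_n]`. -/
noncomputable def pows {n h : ℕ} (hh : h ≤ n) (d : Fin h → ℕ) :
    Ideal (MvPolynomial (Fin n) k) :=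
  Ideal.span (Set.range fun i : Fin h => (X (Fin.castLE hh i) : MvPolynomial (Fin n) k) ^ d i)

/-- `u` is the exponent vector of the lexicographically largest monomial of degree `D`
not belonging to the ideal `I` (convention `x_1 > x_2 > ... > x_n`). -/
def IsLexLargestNonmember {n : ℕ} (I : Ideal (MvPolynomial (Fin n) k)) (D : ℕ)
    (u : Fin n →₀ ℕ) : Prop :=
  (∑ i, u i) = D ∧ (monomial u (1 : k)) ∉ I ∧
    ∀ v : Fin n →₀ ℕ, (∑ i, v i) = D → (monomial v (1 : k)) ∉ I → toLex v ≤ toLex u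

/-- Hilbert–Samuel (cumulative Hilbert) function of `S/I`. -/
noncomputable def cumHF {n : ℕ} (I : Ideal (MvPolynomial (Fin n) k)) (m : ℕ) : ℤ :=
  ∑ j ∈ Finset.range (m + 1), (HF I j : ℤ)

/-- Forward difference operator. -/
def diffOp (f : ℕ → ℤ) : ℕ → ℤ := fun m => f (m + 1) - f m

/-- The multiplicity `e(S/I)`, where `t = dim S/I`: the eventual (constant) value of the
`t`-th finite difference of the Hilbert–Samuel function of `S/I`. -/
noncomputable def mult {n : ℕ} (I : Ideal (MvPolynomial (Fin n) k)) (t : ℕ) : ℤ :=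
  Filter.limsup (diffOp^[t] (cumHF I)) Filter.atTop

/-- The height of an ideal: the infimum of heights of primes containing it. -/
noncomputable def idealHeight {n : ℕ} (I : Ideal (MvPolynomial (Fin n) k)) : ℕ∞ :=
  ⨅ (P : PrimeSpectrum (MvPolynomial (Fin n) k)) (_ : I ≤ P.asIdeal), Order.height P

/-- A homogeneous ideal. -/
def IsHomogeneousIdeal {n : ℕ} (I : Ideal (MvPolynomial (Fin n) k)) : Prop :=
  ∀ f ∈ I, ∀ m : ℕ, homogeneousComponent m f ∈ I

/-- Hilbert function of the graded submodule `a/f` of `S/f` in degree `m`. -/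
noncomputable def HFsub {n : ℕ} (f a : Ideal (MvPolynomial (Fin n) k)) (m : ℕ) : ℕ :=
  Module.finrank k
    ((Submodule.map (Ideal.Quotient.mkₐ k f).toLinearMap (homogeneousSubmodule (Fin n) k m)) ⊓
      (Submodule.map (Ideal.Quotient.mkₐ k f).toLinearMap (Submodule.restrictScalars k a)) :
      Submodule k (MvPolynomial (Fin n) k ⧸ f))

/-!
`L(d;D)` is a monomial ideal, so `S/L(d;D)` has the standard monomials as a `k`-basis: the
exponents in the box `∏ [0, dᵢ)` that do not dominate the exponent `u` of `U_D`. Those that do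
dominate `u` form the sub-box `∏ [uᵢ, dᵢ)`, whence `dim S/L(d;D) = d₁d₂d₃ - ∏ (dᵢ - uᵢ)`.
The lex-largest exponent of degree `D` in the box is filled greedily,
`u = (d₁ - 1, …, d_{a-1} - 1, D - ∑_{i<a} (dᵢ - 1), 0, …)`, so that `dᵢ - uᵢ = cᵢ`.
-/

theorem finrank_quotient_span_monomial {σ : Type*} (G : Set (σ →₀ ℕ)) :
    Module.finrank k (MvPolynomial σ k ⧸ Ideal.span ((fun s => monomial s (1 : k)) '' G)) =
      Nat.card {v : σ →₀ ℕ // ∀ g ∈ G, ¬ g ≤ v} := by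
  set N : Set (σ →₀ ℕ) := {v | ∀ g ∈ G, ¬ g ≤ v}
  set I := Ideal.span ((fun s => monomial s (1 : k)) '' G)
  have hI : I.restrictScalars k = AddMonoidAlgebra.supported k k Nᶜ := by
    ext p
    rw [Submodule.restrictScalars_mem, mem_ideal_span_monomial_image]
    exact ⟨fun h xi hxi => by simpa [N] using h xi hxi, fun h xi hxi => by simpa [N] using h hxi⟩
  have hcompl : IsCompl (AddMonoidAlgebra.supported k k Nᶜ : Submodule k (MvPolynomial σ k))
      (AddMonoidAlgebra.supported k k N) :=
    (Submodule.orderIsoMapComap (AddMonoidAlgebra.coeffLinearEquiv k)).symm.isCompl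
      ⟨Finsupp.disjoint_supported_supported isCompl_compl.symm.disjoint,
        Finsupp.codisjoint_supported_supported isCompl_compl.symm.codisjoint⟩
  calc Module.finrank k (MvPolynomial σ k ⧸ I)
      = Module.finrank k (MvPolynomial σ k ⧸ I.restrictScalars k) :=
        (Submodule.Quotient.restrictScalarsEquiv k I).finrank_eq.symm
    _ = Module.finrank k (AddMonoidAlgebra.supported k k N) := by
        rw [hI]; exact (Submodule.quotientEquivOfIsCompl _ _ hcompl).finrank_eq
    _ = Module.finrank k (N →₀ k) := (AddMonoidAlgebra.supportedEquivFinsupp N).finrank_eq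
    _ = Nat.card N := by
        rw [Module.finrank, rank_finsupp_self, Cardinal.toNat_lift, Nat.card]

theorem Finsupp.card_box_sdiff_Ici {ι : Type*} [Fintype ι] (d : ι → ℕ) (u : ι →₀ ℕ) :
    Nat.card {v : ι →₀ ℕ // (∀ i, v i < d i) ∧ ¬ u ≤ v} = ∏ i, d i - ∏ i, (d i - u i) := by
  classical
  let box := Fintype.piFinset fun i => Finset.range (d i)
  let subBox := Fintype.piFinset fun i => Finset.Ico (u i) (d i)
  have hsub : subBox ⊆ box :=
    Fintype.piFinset_subset _ _ fun i => Finset.Ico_subset_Iio_self.trans_eq (Nat.Iio_eq_range _)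
  let e : {v : ι →₀ ℕ // (∀ i, v i < d i) ∧ ¬ u ≤ v} ≃ (box \ subBox : Finset (ι → ℕ)) :=
    Finsupp.equivFunOnFinite.subtypeEquiv fun v => by
      simp only [box, subBox, Finset.mem_sdiff, Fintype.mem_piFinset, Finset.mem_range,
        Finset.mem_Ico, Finsupp.le_def, equivFunOnFinite_apply]
      constructor
      · rintro ⟨hlt, hu⟩
        exact ⟨hlt, fun h => hu fun i => (h i).1⟩
      · rintro ⟨hlt, hu⟩
        exact ⟨hlt, fun h => hu fun i => ⟨h i, hlt i⟩⟩
  rw [Nat.card_congr e, Nat.card_eq_fintype_card, Fintype.card_coe,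
    Finset.card_sdiff_of_subset hsub, Fintype.card_piFinset, Fintype.card_piFinset]
  simp

theorem pows_eq_span_monomial {n h : ℕ} (hh : h ≤ n) (d : Fin h → ℕ) :
    pows (k := k) hh d = Ideal.span ((fun s => monomial s (1 : k)) ''
      Set.range fun i => Finsupp.single (Fin.castLE hh i) (d i)) := by
  rw [pows, ← Set.range_comp]
  simp [Function.comp_def, X_pow_eq_monomial]

theorem monomial_mem_pows_iff {n h : ℕ} (hh : h ≤ n) (d : Fin h → ℕ) (v : Fin n →₀ ℕ) :
    monomial v (1 : k) ∈ pows hh d ↔ ∃ i, d i ≤ v (Fin.castLE hh i) := by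
  simp [pows_eq_span_monomial, mem_ideal_span_monomial_image, Finsupp.single_le_iff]

theorem isLexLargestNonmember_pows_iff {n : ℕ} (d : Fin n → ℕ) (D : ℕ) (u : Fin n →₀ ℕ) :
    IsLexLargestNonmember (pows (k := k) le_rfl d) D u ↔
      ∑ i, u i = D ∧ (∀ i, u i < d i) ∧
        ∀ v : Fin n →₀ ℕ, ∑ i, v i = D → (∀ i, v i < d i) → toLex v ≤ toLex u := by
  simp [IsLexLargestNonmember, monomial_mem_pows_iff]

theorem eq_min_of_lexMax_box_fin_three {d : Fin 3 → ℕ} {D : ℕ} {u : Fin 3 →₀ ℕ}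
    (hsum : ∑ i, u i = D) (hbox : ∀ i, u i < d i)
    (hmax : ∀ v : Fin 3 →₀ ℕ, ∑ i, v i = D → (∀ i, v i < d i) → toLex v ≤ toLex u) :
    u 0 = min (d 0 - 1) D ∧ u 1 = min (d 1 - 1) (D - u 0) := by
  let w : Fin 3 →₀ ℕ := Finsupp.equivFunOnFinite.symm
    ![min (d 0 - 1) D, min (d 1 - 1) (D - min (d 0 - 1) D),
      D - min (d 0 - 1) D - min (d 1 - 1) (D - min (d 0 - 1) D)]
  rw [Fin.sum_univ_three] at hsum
  have := hbox 0; have := hbox 1; have := hbox 2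
  -- `w` is the greedy point of the box; it lies in the box, and no point of the box with
  -- coordinate sum `D` can beat it at its first differing coordinate.
  have hwu : toLex w ≤ toLex u :=
    hmax w (by simp [w, Fin.sum_univ_three]) (fun i => by fin_cases i <;> simp [w] <;> omega)
  rcases hwu.lt_or_eq with ⟨j, hj, hlt⟩ | hwu
  · have h0 := hj 0; have h1 := hj 1
    fin_cases j <;> simp [w] at h0 h1 hlt <;> omega
  · obtain rfl : u = w := congr(ofLex $hwu).symm
    exact ⟨rfl, rfl⟩

theorem eq_sub_of_eq_min_fin_three {d c : Fin 3 → ℕ} {D : ℕ} {a : Fin 3} {u : Fin 3 →₀ ℕ}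
    (ha1 : ∑ i ∈ Finset.Iio a, (d i - 1) < D)
    (ha2 : D ≤ ∑ i ∈ Finset.Iic a, (d i - 1))
    (hc : ∀ i, c i = if i < a then 1
      else if i = a then d a - (D - ∑ j ∈ Finset.Iio a, (d j - 1)) else d i)
    (hsum : ∑ i, u i = D) (hbox : ∀ i, u i < d i)
    (h0 : u 0 = min (d 0 - 1) D) (h1 : u 1 = min (d 1 - 1) (D - u 0)) :
    ∀ i, c i = d i - u i := by
  rw [← Finset.sum_Iio_add_eq_sum_Iic] at ha2
  simp only [← Finset.filter_gt_eq_Iio, Finset.sum_filter, Fin.sum_univ_three] at ha1 ha2 hc hsum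
  have := hbox 0; have := hbox 1; have := hbox 2
  fin_cases a <;> simp [Fin.forall_fin_succ] at ha1 ha2 hc ⊢ <;> omega

theorem stmt2_general {k : Type} [Field k] (d : Fin 3 → ℕ) (D : ℕ) (a : Fin 3)
    (ha1 : ∑ i ∈ Finset.Iio a, (d i - 1) < D)
    (ha2 : D ≤ ∑ i ∈ Finset.Iic a, (d i - 1))
    (c : Fin 3 → ℕ)
    (hc : ∀ i, c i = if i < a then 1
      else if i = a then d a - (D - ∑ j ∈ Finset.Iio a, (d j - 1)) else d i)
    (u : Fin 3 →₀ ℕ)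
    (hu : IsLexLargestNonmember (pows (k := k) le_rfl d) D u) :
    Module.finrank k
      (MvPolynomial (Fin 3) k ⧸ (pows (k := k) le_rfl d ⊔ Ideal.span {monomial u (1 : k)})) =
      d 0 * d 1 * d 2 - c 0 * c 1 * c 2 := by
  obtain ⟨hsum, hbox, hmax⟩ := (isLexLargestNonmember_pows_iff d D u).mp hu
  obtain ⟨h0, h1⟩ := eq_min_of_lexMax_box_fin_three hsum hbox hmax
  have hcu := eq_sub_of_eq_min_fin_three ha1 ha2 hc hsum hbox h0 h1
  rw [pows_eq_span_monomial, ← Set.image_singleton (f := fun s => monomial s (1 : k)),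
    ← Ideal.span_union, ← Set.image_union, finrank_quotient_span_monomial,
    Nat.card_congr (Equiv.subtypeEquivRight (q := fun v => (∀ i, v i < d i) ∧ ¬ u ≤ v)
      fun v => by simp [Finsupp.single_le_iff, and_comm]),
    Finsupp.card_box_sdiff_Ici]
  simp [Fin.prod_univ_three, hcu]

theorem stmt2 {k : Type} [Field k] (d : Fin 3 → ℕ) (hd1 : ∀ i, 1 ≤ d i)
    (hmono : Monotone d) (D : ℕ) (hD1 : 1 ≤ D) (hD : D ≤ ∑ i, (d i - 1))
    (a : Fin 3)
    (ha1 : ∑ i ∈ Finset.Iio a, (d i - 1) < D)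
    (ha2 : D ≤ ∑ i ∈ Finset.Iic a, (d i - 1))
    (c : Fin 3 → ℕ)
    (hc : ∀ i, c i = if i < a then 1
      else if i = a then d a - (D - ∑ j ∈ Finset.Iio a, (d j - 1)) else d i)
    (u : Fin 3 →₀ ℕ)
    (hu : IsLexLargestNonmember (pows (k := k) le_rfl d) D u) :
    Module.finrank k
      (MvPolynomial (Fin 3) k ⧸ (pows (k := k) le_rfl d ⊔ Ideal.span {monomial u (1 : k)})) =
      d 0 * d 1 * d 2 - c 0 * c 1 * c 2 :=
  stmt2_general d D a ha1 ha2 c hc u hu
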